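/- arXiv:2307.14615 — 6 statements merged into one kernel-verified Lean document; each statement's English description precedes it below -/
import Mathlib

section
/- Let Σ ∈ ℝ^{(n+m)×(n+m)} be symmetric positive semidefinite and w^k ∈ ℝⁿ⁺ᵐ. Suppose w* = (x*, λ*) ∈ Ω is a VI solution, and w̃ = (x̃, λ̃) ∈ Ω satisfies the proximal VI at w^k with matrix Σ. Then (w^k − w*)ᵀΣ(w^k − w̃) ≥ ‖w̃ − w^k‖²_Σ. -/
open Matrix

/-- The continuous linear functional `u ↦ v ⬝ᵥ u` on `ℝⁿ`, used to express
that `v` is the gradient of a scalar function. -/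
noncomputable def dotCLM {n : ℕ} (v : Fin n → ℝ) : (Fin n → ℝ) →L[ℝ] ℝ :=
  LinearMap.toContinuousLinearMap (∑ j, v j • LinearMap.proj j)

/-- The `x`-part of `w = (x, λ) ∈ ℝⁿ⁺ᵐ`. -/
def xpart {n m : ℕ} (w : Fin n ⊕ Fin m → ℝ) : Fin n → ℝ := fun i => w (Sum.inl i)

/-- The `λ`-part of `w = (x, λ) ∈ ℝⁿ⁺ᵐ`. -/
def lpart {n m : ℕ} (w : Fin n ⊕ Fin m → ℝ) : Fin m → ℝ := fun j => w (Sum.inr j)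

/-- `Ω = X × ℝ₊ᵐ` viewed inside `ℝⁿ⁺ᵐ`. -/
def OmegaSet {n m : ℕ} (X : Set (Fin n → ℝ)) : Set (Fin n ⊕ Fin m → ℝ) :=
  {w | xpart w ∈ X ∧ ∀ j, 0 ≤ lpart w j}

/-- `Γ(w) = (DΦ(x)ᵀλ, −Φ(x))` for `w = (x, λ)`, where row `i` of the Jacobian `DΦ`
is the gradient `φ' i`. -/
noncomputable def Gam {n m : ℕ} (φ : Fin m → (Fin n → ℝ) → ℝ)
    (φ' : Fin m → (Fin n → ℝ) → (Fin n → ℝ)) (w : Fin n ⊕ Fin m → ℝ) :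
    Fin n ⊕ Fin m → ℝ :=
  Sum.elim (∑ i, lpart w i • φ' i (xpart w)) (fun i => -(φ i (xpart w)))

lemma dotCLM_apply {n : ℕ} (v u : Fin n → ℝ) : dotCLM v u = v ⬝ᵥ u := by
  simp [dotCLM, dotProduct, LinearMap.sum_apply]

lemma grad_ineq {n : ℕ} {g : (Fin n → ℝ) → ℝ} (hg : ConvexOn ℝ Set.univ g)
    {x y v : Fin n → ℝ} (hd : HasFDerivAt g (dotCLM v) x) :
    v ⬝ᵥ (y - x) ≤ g y - g x := by
  set L : ℝ →ᵃ[ℝ] (Fin n → ℝ) := AffineMap.lineMap x y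
  have hF : ConvexOn ℝ Set.univ (g ∘ L) := by
    have := hg.comp_affineMap L
    simpa using this
  have hline : HasDerivAt (fun t : ℝ => L t) (y - x) 0 := by
    have h1 : HasDerivAt (fun t : ℝ => t • (y - x) + x) ((1:ℝ) • (y - x)) 0 :=
      ((hasDerivAt_id (0:ℝ)).smul_const (y - x)).add_const x
    have he : (fun t : ℝ => L t) = fun t : ℝ => t • (y - x) + x := by
      funext t
      simp [L, AffineMap.lineMap_apply_module]
      module
    rw [he]
    simpa using h1
  have hL0 : L 0 = x := by simp [L]
  have hcomp : HasDerivAt (g ∘ L) (dotCLM v (y - x)) 0 := by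
    apply HasFDerivAt.comp_hasDerivAt
    · rw [hL0]; exact hd
    · exact hline
  have := hF.le_slope_of_hasDerivAt (Set.mem_univ 0) (Set.mem_univ 1) one_pos hcomp
  have hs : slope (g ∘ L) 0 1 = g y - g x := by
    simp [slope, L, AffineMap.lineMap_apply_module]
  rw [hs, dotCLM_apply] at this
  exact this

lemma dot_sum_expand {n m : ℕ} (a : Fin n → ℝ) (l : Fin m → ℝ) (g : Fin m → Fin n → ℝ) :
    a ⬝ᵥ (∑ j, l j • g j) = ∑ j, l j * (a ⬝ᵥ g j) := by
  simp only [dotProduct, Finset.sum_apply, Pi.smul_apply, smul_eq_mul, Finset.mul_sum]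
  rw [Finset.sum_comm]
  exact Finset.sum_congr rfl fun j _ => Finset.sum_congr rfl fun i _ => by ring

lemma gam_expand {n m : ℕ} (φ : Fin m → (Fin n → ℝ) → ℝ)
    (φ' : Fin m → (Fin n → ℝ) → (Fin n → ℝ)) (u w : Fin n ⊕ Fin m → ℝ) :
    u ⬝ᵥ Gam φ φ' w = ∑ j, lpart w j * (xpart u ⬝ᵥ φ' j (xpart w))
      - ∑ j, lpart u j * φ j (xpart w) := by
  have : u ⬝ᵥ Gam φ φ' w
      = (∑ i, xpart u i * (∑ j, lpart w j • φ' j (xpart w)) i)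
        + ∑ j, lpart u j * (-(φ j (xpart w))) := by
    simp [dotProduct, Gam, Fintype.sum_sum_type, xpart, lpart]
  rw [this]
  have h2 : (∑ i, xpart u i * (∑ j, lpart w j • φ' j (xpart w)) i)
      = xpart u ⬝ᵥ (∑ j, lpart w j • φ' j (xpart w)) := rfl
  rw [h2, dot_sum_expand]
  simp [mul_neg, Finset.sum_neg_distrib, sub_eq_add_neg]

/-- Inequality (38): if `w*` solves the VI and `w̃` satisfies the proximal VI at `wᵏ`
with matrix `Σ`, then `(wᵏ − w*)ᵀΣ(wᵏ − w̃) ≥ ‖w̃ − wᵏ‖²_Σ`. -/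
theorem stmt4 {n m : ℕ}
    (hn : 0 < n) (hm : 0 < m)
    (X : Set (Fin n → ℝ)) (hXne : X.Nonempty) (hXcl : IsClosed X) (hXcvx : Convex ℝ X)
    (f : (Fin n → ℝ) → ℝ) (hf : ConvexOn ℝ Set.univ f)
    (φ : Fin m → (Fin n → ℝ) → ℝ) (hφ : ∀ i, ConvexOn ℝ Set.univ (φ i))
    (φ' : Fin m → (Fin n → ℝ) → (Fin n → ℝ))
    (hφ' : ∀ i x, HasFDerivAt (φ i) (dotCLM (φ' i x)) x)
    (hφ'c : ∀ i, Continuous (φ' i))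
    (S : Matrix (Fin n ⊕ Fin m) (Fin n ⊕ Fin m) ℝ) (hS : S.PosSemidef)
    (wk ws wt : Fin n ⊕ Fin m → ℝ)
    (hws : ws ∈ OmegaSet (m := m) X)
    (hVI : ∀ w ∈ OmegaSet (m := m) X,
      f (xpart w) - f (xpart ws) + (w - ws) ⬝ᵥ Gam φ φ' ws ≥ 0)
    (hwt : wt ∈ OmegaSet (m := m) X)
    (hprox : ∀ w ∈ OmegaSet (m := m) X,
      f (xpart w) - f (xpart wt) + (w - wt) ⬝ᵥ (Gam φ φ' wt + S.mulVec (wt - wk)) ≥ 0) :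
    (wk - ws) ⬝ᵥ S.mulVec (wk - wt) ≥ (wt - wk) ⬝ᵥ S.mulVec (wt - wk) := by
  set xt := xpart wt
  set xs := xpart ws
  -- monotonicity of Γ
  have hmono : 0 ≤ (wt - ws) ⬝ᵥ Gam φ φ' wt - (wt - ws) ⬝ᵥ Gam φ φ' ws := by
    rw [gam_expand, gam_expand]
    have hx : xpart (wt - ws) = xt - xs := rfl
    have hl : lpart (wt - ws) = lpart wt - lpart ws := rfl
    rw [hx, hl]
    have key : (∑ j, lpart wt j * ((xt - xs) ⬝ᵥ φ' j xt) - ∑ j, (lpart wt - lpart ws) j * φ j xt)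
        - (∑ j, lpart ws j * ((xt - xs) ⬝ᵥ φ' j xs) - ∑ j, (lpart wt - lpart ws) j * φ j xs)
        = ∑ j, (lpart wt j * ((xt - xs) ⬝ᵥ φ' j xt - (φ j xt - φ j xs))
              + lpart ws j * (-((xt - xs) ⬝ᵥ φ' j xs) - (φ j xs - φ j xt))) := by
      rw [← Finset.sum_sub_distrib, ← Finset.sum_sub_distrib, ← Finset.sum_sub_distrib]
      exact Finset.sum_congr rfl fun j _ => by simp [Pi.sub_apply]; ring
    rw [key]
    apply Finset.sum_nonneg
    intro j _
    have g1 : φ' j xt ⬝ᵥ (xs - xt) ≤ φ j xs - φ j xt := grad_ineq (hφ j) (hφ' j xt)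
    have g2 : φ' j xs ⬝ᵥ (xt - xs) ≤ φ j xt - φ j xs := grad_ineq (hφ j) (hφ' j xs)
    have e1 : φ' j xt ⬝ᵥ (xs - xt) = -((xt - xs) ⬝ᵥ φ' j xt) := by
      rw [dotProduct_comm, ← neg_sub xt xs, neg_dotProduct]
    have e2 : φ' j xs ⬝ᵥ (xt - xs) = (xt - xs) ⬝ᵥ φ' j xs := dotProduct_comm _ _
    rw [e1] at g1; rw [e2] at g2
    have h1 : 0 ≤ lpart wt j * ((xt - xs) ⬝ᵥ φ' j xt - (φ j xt - φ j xs)) :=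
      mul_nonneg (hwt.2 j) (by linarith)
    have h2 : 0 ≤ lpart ws j * (-((xt - xs) ⬝ᵥ φ' j xs) - (φ j xs - φ j xt)) :=
      mul_nonneg (hws.2 j) (by linarith)
    linarith
  -- combine VI and prox
  have h1 := hVI wt hwt
  have h2 := hprox ws hws
  rw [dotProduct_add] at h2
  have e3 : (ws - wt) ⬝ᵥ Gam φ φ' wt = -((wt - ws) ⬝ᵥ Gam φ φ' wt) := by
    rw [← neg_sub wt ws, neg_dotProduct]
  rw [e3] at h2
  have hkey : 0 ≤ (ws - wt) ⬝ᵥ S.mulVec (wt - wk) := by linarith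
  -- final algebra
  have efin : (wk - ws) ⬝ᵥ S.mulVec (wk - wt)
      = (wt - wk) ⬝ᵥ S.mulVec (wt - wk) + (ws - wt) ⬝ᵥ S.mulVec (wt - wk) := by
    have : wk - ws = -((wt - wk) + (ws - wt)) := by abel
    rw [this, ← neg_sub wt wk, Matrix.mulVec_neg, neg_dotProduct, dotProduct_neg,
      add_dotProduct, neg_neg]
  rw [efin]
  linarith
end

section
/- Let Σ ∈ ℝ^{(n+m)×(n+m)} be symmetric positive semidefinite, w^k ∈ ℝⁿ⁺ᵐ, and γ ∈ (0, 2). Suppose w̃ = (x̃, λ̃) ∈ Ω satisfies the proximal VI at w^k with matrix Σ, and set w^{k+1} = w^k − γ(w^k − w̃). Then for every w = (x, λ) ∈ Ω: f(x) − f(x̃) + (w − w̃)ᵀΓ(w̃) + (1/(2γ))·(‖w − w^k‖²_Σ − ‖w − w^{k+1}‖²_Σ) ≥ (1 − γ/2)·‖w^k − w̃‖²_Σ. -/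
open Matrix

/-- Lemma 3 (inequality (41)) for the relaxed PPA. -/
theorem stmt6 {n m : ℕ}
    (hn : 0 < n) (hm : 0 < m)
    (X : Set (Fin n → ℝ)) (hXne : X.Nonempty) (hXcl : IsClosed X) (hXcvx : Convex ℝ X)
    (f : (Fin n → ℝ) → ℝ) (hf : ConvexOn ℝ Set.univ f)
    (φ : Fin m → (Fin n → ℝ) → ℝ) (hφ : ∀ i, ConvexOn ℝ Set.univ (φ i))
    (φ' : Fin m → (Fin n → ℝ) → (Fin n → ℝ))
    (hφ' : ∀ i x, HasFDerivAt (φ i) (dotCLM (φ' i x)) x)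
    (hφ'c : ∀ i, Continuous (φ' i))
    (S : Matrix (Fin n ⊕ Fin m) (Fin n ⊕ Fin m) ℝ) (hS : S.PosSemidef)
    (γ : ℝ) (hγ0 : 0 < γ) (hγ2 : γ < 2)
    (wk wt : Fin n ⊕ Fin m → ℝ)
    (hwt : wt ∈ OmegaSet (m := m) X)
    (hprox : ∀ w ∈ OmegaSet (m := m) X,
      f (xpart w) - f (xpart wt) + (w - wt) ⬝ᵥ (Gam φ φ' wt + S.mulVec (wt - wk)) ≥ 0)
    (wk1 : Fin n ⊕ Fin m → ℝ) (hwk1 : wk1 = wk - γ • (wk - wt)) :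
    ∀ w ∈ OmegaSet (m := m) X,
      f (xpart w) - f (xpart wt) + (w - wt) ⬝ᵥ Gam φ φ' wt
        + (1 / (2 * γ)) *
            ((w - wk) ⬝ᵥ S.mulVec (w - wk) - (w - wk1) ⬝ᵥ S.mulVec (w - wk1))
      ≥ (1 - γ / 2) * ((wk - wt) ⬝ᵥ S.mulVec (wk - wt)) := by
  have hsymm : ∀ a b : Fin n ⊕ Fin m → ℝ, a ⬝ᵥ S.mulVec b = b ⬝ᵥ S.mulVec a := by
    intro a b
    have hT : Sᵀ = S := by exact hS.1.eq
    rw [Matrix.dotProduct_mulVec, ← Matrix.mulVec_transpose, hT, dotProduct_comm]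
  intro w hw
  have h := hprox w hw
  set a : Fin n ⊕ Fin m → ℝ := w - wk with ha
  set b : Fin n ⊕ Fin m → ℝ := wk - wt with hb
  have hab : w - wt = a + b := by simp [ha, hb]; try abel
  have hwk1' : w - wk1 = a + γ • b := by rw [hwk1]; simp [ha, hb]; try abel
  have e1 : (w - wk1) ⬝ᵥ S.mulVec (w - wk1)
      = a ⬝ᵥ S.mulVec a + 2 * γ * (a ⬝ᵥ S.mulVec b) + γ ^ 2 * (b ⬝ᵥ S.mulVec b) := by
    rw [hwk1', Matrix.mulVec_add, Matrix.mulVec_smul, dotProduct_add,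
      add_dotProduct, add_dotProduct, dotProduct_smul,
      smul_dotProduct, smul_dotProduct, dotProduct_smul,
      hsymm b a]
    simp only [smul_eq_mul]
    try ring
  have e2 : (w - wt) ⬝ᵥ (Gam φ φ' wt + S.mulVec (wt - wk))
      = (w - wt) ⬝ᵥ Gam φ φ' wt - (a ⬝ᵥ S.mulVec b + b ⬝ᵥ S.mulVec b) := by
    have hneg : wt - wk = -b := by simp [hb]
    rw [dotProduct_add, hneg, Matrix.mulVec_neg, dotProduct_neg, hab,
      add_dotProduct, add_dotProduct]
    ring
  rw [e2] at h
  rw [e1]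
  have hγ : (0:ℝ) < 2 * γ := by linarith
  have key : (1 / (2 * γ)) *
      ((w - wk) ⬝ᵥ S.mulVec (w - wk) -
        (a ⬝ᵥ S.mulVec a + 2 * γ * (a ⬝ᵥ S.mulVec b) + γ ^ 2 * (b ⬝ᵥ S.mulVec b)))
      = -(a ⬝ᵥ S.mulVec b) - (γ / 2) * (b ⬝ᵥ S.mulVec b) := by
    rw [← ha]
    field_simp
    ring
  rw [key]
  linarith
end

section
/- (Key inequality for the prediction-correction method.) Let Q, M ∈ ℝ^{(n+m)×(n+m)} with M invertible, β > 0, and suppose Σ := Q·M⁻¹ is symmetric positive semidefinite. Let w^k ∈ ℝⁿ⁺ᵐ, suppose w̃ = (x̃, λ̃) ∈ Ω satisfies the prediction VI at w^k with matrix Q, and set w^{k+1} = w^k − β·M(w^k − w̃) and G := Qᵀ + Q − β·MᵀΣM. Then for every w = (x, λ) ∈ Ω: β·[f(x) − f(x̃) + (w − w̃)ᵀΓ(w̃)] ≥ ½(‖w − w^{k+1}‖²_Σ − ‖w − w^k‖²_Σ) + (β/2)·(w̃ − w^k)ᵀG(w̃ − w^k). -/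
open Matrix

/-- Key inequality (72) for the prediction-correction method. -/
theorem stmt11 {n m : ℕ}
    (hn : 0 < n) (hm : 0 < m)
    (X : Set (Fin n → ℝ)) (hXne : X.Nonempty) (hXcl : IsClosed X) (hXcvx : Convex ℝ X)
    (f : (Fin n → ℝ) → ℝ) (hf : ConvexOn ℝ Set.univ f)
    (φ : Fin m → (Fin n → ℝ) → ℝ) (hφ : ∀ i, ConvexOn ℝ Set.univ (φ i))
    (φ' : Fin m → (Fin n → ℝ) → (Fin n → ℝ))
    (hφ' : ∀ i x, HasFDerivAt (φ i) (dotCLM (φ' i x)) x)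
    (hφ'c : ∀ i, Continuous (φ' i))
    (Q M : Matrix (Fin n ⊕ Fin m) (Fin n ⊕ Fin m) ℝ) (hM : IsUnit M)
    (β : ℝ) (hβ : 0 < β)
    (hSig : (Q * M⁻¹).PosSemidef)
    (wk wt : Fin n ⊕ Fin m → ℝ)
    (hwt : wt ∈ OmegaSet (m := m) X)
    (hpred : ∀ w ∈ OmegaSet (m := m) X,
      f (xpart w) - f (xpart wt) + (w - wt) ⬝ᵥ Gam φ φ' wt
        ≥ (w - wt) ⬝ᵥ Q.mulVec (wk - wt))
    (wk1 : Fin n ⊕ Fin m → ℝ) (hwk1 : wk1 = wk - β • M.mulVec (wk - wt))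
    (G : Matrix (Fin n ⊕ Fin m) (Fin n ⊕ Fin m) ℝ)
    (hG : G = Qᵀ + Q - β • (Mᵀ * (Q * M⁻¹) * M)) :
    ∀ w ∈ OmegaSet (m := m) X,
      β * (f (xpart w) - f (xpart wt) + (w - wt) ⬝ᵥ Gam φ φ' wt)
        ≥ (1 / 2) * ((w - wk1) ⬝ᵥ (Q * M⁻¹).mulVec (w - wk1)
            - (w - wk) ⬝ᵥ (Q * M⁻¹).mulVec (w - wk))
          + (β / 2) * ((wt - wk) ⬝ᵥ G.mulVec (wt - wk)) := by
  intro w hw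
  set Sg := Q * M⁻¹ with hSg
  have hSgsym : Sgᵀ = Sg := by
    have := hSig.1
    simpa [Matrix.IsHermitian] using this
  have hsym : ∀ v1 v2 : Fin n ⊕ Fin m → ℝ,
      v1 ⬝ᵥ Sg.mulVec v2 = v2 ⬝ᵥ Sg.mulVec v1 := by
    intro v1 v2
    rw [Matrix.dotProduct_mulVec, ← Matrix.vecMul_transpose, hSgsym,
      dotProduct_comm]
  have hQd : Q = Sg * M := by
    rw [hSg, Matrix.mul_assoc, Matrix.nonsing_inv_mul M
      ((Matrix.isUnit_iff_isUnit_det M).mp hM), Matrix.mul_one]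
  set d : Fin n ⊕ Fin m → ℝ := wk - wt with hd
  set u : Fin n ⊕ Fin m → ℝ := w - wk with hu
  have hwk1' : w - wk1 = u + β • M.mulVec d := by
    rw [hwk1, hu]; abel
  have hwtk : wt - wk = -d := by rw [hd]; abel
  have hwwt : w - wt = u + d := by rw [hu, hd]; abel
  -- expand the quadratic
  have hexp : (w - wk1) ⬝ᵥ Sg.mulVec (w - wk1)
      = u ⬝ᵥ Sg.mulVec u + 2 * β * (u ⬝ᵥ Sg.mulVec (M.mulVec d))
        + β ^ 2 * ((M.mulVec d) ⬝ᵥ Sg.mulVec (M.mulVec d)) := by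
    rw [hwk1']
    simp only [add_dotProduct, dotProduct_add, Matrix.mulVec_add,
      Matrix.mulVec_smul, smul_dotProduct, dotProduct_smul, smul_eq_mul]
    rw [hsym (M.mulVec d) u]
    ring
  have hSgMQ : ∀ v1 v2 : Fin n ⊕ Fin m → ℝ,
      v1 ⬝ᵥ Sg.mulVec (M.mulVec v2) = v1 ⬝ᵥ Q.mulVec v2 := by
    intro v1 v2
    rw [Matrix.mulVec_mulVec, ← hQd]
  have hQT : d ⬝ᵥ Qᵀ.mulVec d = d ⬝ᵥ Q.mulVec d := by
    rw [Matrix.dotProduct_mulVec, Matrix.vecMul_transpose]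
    exact dotProduct_comm _ _
  have hMtS : d ⬝ᵥ (Mᵀ * Sg * M).mulVec d = (M.mulVec d) ⬝ᵥ Sg.mulVec (M.mulVec d) := by
    rw [← Matrix.mulVec_mulVec, ← Matrix.mulVec_mulVec, Matrix.dotProduct_mulVec,
      Matrix.vecMul_transpose]
  have hGexp : (wt - wk) ⬝ᵥ G.mulVec (wt - wk)
      = 2 * (d ⬝ᵥ Q.mulVec d) - β * ((M.mulVec d) ⬝ᵥ Sg.mulVec (M.mulVec d)) := by
    rw [hwtk, hG]
    rw [neg_dotProduct, Matrix.mulVec_neg, dotProduct_neg, neg_neg]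
    rw [Matrix.sub_mulVec, Matrix.add_mulVec, dotProduct_sub, dotProduct_add,
      hQT, Matrix.smul_mulVec, dotProduct_smul, smul_eq_mul, hMtS]
    ring
  have hcross : u ⬝ᵥ Q.mulVec d + d ⬝ᵥ Q.mulVec d = (w - wt) ⬝ᵥ Q.mulVec d := by
    rw [hwwt, add_dotProduct]
  have key : (1 / 2) * ((w - wk1) ⬝ᵥ Sg.mulVec (w - wk1)
        - (w - wk) ⬝ᵥ Sg.mulVec (w - wk))
      + (β / 2) * ((wt - wk) ⬝ᵥ G.mulVec (wt - wk))
      = β * ((w - wt) ⬝ᵥ Q.mulVec d) := by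
    rw [hexp, hGexp, ← hu, ← hcross, hSgMQ]
    ring
  have hpw := hpred w hw
  rw [key]
  have := mul_le_mul_of_nonneg_left hpw (le_of_lt hβ)
  linarith
end

section
/- (Sequence contraction for the prediction-correction method.) Let Q, M ∈ ℝ^{(n+m)×(n+m)} with M invertible, β > 0, Σ := Q·M⁻¹ symmetric positive semidefinite, and G := Qᵀ + Q − β·MᵀΣM. Let w^k ∈ ℝⁿ⁺ᵐ, suppose w* = (x*, λ*) ∈ Ω is a VI solution, w̃ = (x̃, λ̃) ∈ Ω satisfies the prediction VI at w^k with matrix Q, and set w^{k+1} = w^k − β·M(w^k − w̃). Then ‖w* − w^{k+1}‖²_Σ ≤ ‖w* − w^k‖²_Σ − β·(w^k − w̃)ᵀG(w^k − w̃). -/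
open Matrix

/-- Gradient inequality for a convex differentiable function. -/
theorem grad_ineq12 {k : ℕ} {φ : (Fin k → ℝ) → ℝ} {g : (Fin k → ℝ) → Fin k → ℝ}
    (hc : ConvexOn ℝ Set.univ φ) (hd : ∀ x, HasFDerivAt φ (dotCLM (g x)) x)
    (x y : Fin k → ℝ) : φ x + g x ⬝ᵥ (y - x) ≤ φ y := by
  have hline : HasDerivAt (fun t : ℝ => x + t • (y - x)) (y - x) 0 := by
    simpa using ((hasDerivAt_id (0:ℝ)).smul_const (y - x)).const_add x
  have hfd : HasFDerivAt φ (dotCLM (g x)) (x + (0:ℝ) • (y - x)) := by simpa using hd x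
  have hcomp : HasDerivAt (fun t : ℝ => φ (x + t • (y - x))) (g x ⬝ᵥ (y - x)) 0 := by
    have := hfd.comp_hasDerivAt (0:ℝ) hline
    simpa [dotCLM, dotProduct, mul_comm, Function.comp_def] using this
  have hcv : ConvexOn ℝ Set.univ (fun t : ℝ => φ (x + t • (y - x))) := by
    have h := hc.comp_affineMap (AffineMap.lineMap x y)
    have he : (φ ∘ (AffineMap.lineMap x y) : ℝ → ℝ) = fun t => φ (x + t • (y - x)) := by
      funext t
      simp only [Function.comp_apply, AffineMap.lineMap_apply_module]
      congr 1
      module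
    rw [he] at h
    simpa using h
  have := hcv.le_slope_of_hasDerivAt (Set.mem_univ (0:ℝ)) (Set.mem_univ (1:ℝ)) one_pos hcomp
  simp [slope_def_field] at this
  rw [dotProduct_sub]
  linarith

/-- Expansion of `u ⬝ᵥ Γ(w)`. -/
theorem gam_dot12 {n m : ℕ} (φ : Fin m → (Fin n → ℝ) → ℝ)
    (φ' : Fin m → (Fin n → ℝ) → (Fin n → ℝ)) (w u : Fin n ⊕ Fin m → ℝ) :
    u ⬝ᵥ Gam φ φ' w =
      (∑ j, lpart w j * (φ' j (xpart w) ⬝ᵥ xpart u)) - ∑ j, lpart u j * φ j (xpart w) := by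
  simp only [Gam, dotProduct, Fintype.sum_sum_type, Sum.elim_inl, Sum.elim_inr,
    Finset.sum_apply, Pi.smul_apply, smul_eq_mul, mul_neg, Finset.mul_sum]
  rw [Finset.sum_comm]
  simp only [xpart, lpart, sub_eq_add_neg, Finset.sum_neg_distrib]
  congr 1
  exact Finset.sum_congr rfl fun j _ => Finset.sum_congr rfl fun i _ => by ring

theorem dswap12 {ι : Type*} [Fintype ι] (A : Matrix ι ι ℝ) (u v : ι → ℝ) :
    u ⬝ᵥ A.mulVec v = v ⬝ᵥ Aᵀ.mulVec u := by
  rw [Matrix.dotProduct_mulVec, ← Matrix.mulVec_transpose, dotProduct_comm]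

theorem dMtAM12 {ι : Type*} [Fintype ι] (A M : Matrix ι ι ℝ) (d : ι → ℝ) :
    d ⬝ᵥ (Mᵀ * A * M).mulVec d = M.mulVec d ⬝ᵥ A.mulVec (M.mulVec d) := by
  have h : (Mᵀ * A * M).mulVec d = Mᵀ.mulVec (A.mulVec (M.mulVec d)) := by
    rw [Matrix.mulVec_mulVec, Matrix.mulVec_mulVec, Matrix.mul_assoc]
  rw [h, dswap12, Matrix.transpose_transpose, dotProduct_comm]

/-- Sequence contraction for the prediction-correction method. -/
theorem stmt12 {n m : ℕ}
    (hn : 0 < n) (hm : 0 < m)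
    (X : Set (Fin n → ℝ)) (hXne : X.Nonempty) (hXcl : IsClosed X) (hXcvx : Convex ℝ X)
    (f : (Fin n → ℝ) → ℝ) (hf : ConvexOn ℝ Set.univ f)
    (φ : Fin m → (Fin n → ℝ) → ℝ) (hφ : ∀ i, ConvexOn ℝ Set.univ (φ i))
    (φ' : Fin m → (Fin n → ℝ) → (Fin n → ℝ))
    (hφ' : ∀ i x, HasFDerivAt (φ i) (dotCLM (φ' i x)) x)
    (hφ'c : ∀ i, Continuous (φ' i))
    (Q M : Matrix (Fin n ⊕ Fin m) (Fin n ⊕ Fin m) ℝ) (hM : IsUnit M)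
    (β : ℝ) (hβ : 0 < β)
    (hSig : (Q * M⁻¹).PosSemidef)
    (G : Matrix (Fin n ⊕ Fin m) (Fin n ⊕ Fin m) ℝ)
    (hG : G = Qᵀ + Q - β • (Mᵀ * (Q * M⁻¹) * M))
    (wk ws wt : Fin n ⊕ Fin m → ℝ)
    (hws : ws ∈ OmegaSet (m := m) X)
    (hVI : ∀ w ∈ OmegaSet (m := m) X,
      f (xpart w) - f (xpart ws) + (w - ws) ⬝ᵥ Gam φ φ' ws ≥ 0)
    (hwt : wt ∈ OmegaSet (m := m) X)
    (hpred : ∀ w ∈ OmegaSet (m := m) X,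
      f (xpart w) - f (xpart wt) + (w - wt) ⬝ᵥ Gam φ φ' wt
        ≥ (w - wt) ⬝ᵥ Q.mulVec (wk - wt))
    (wk1 : Fin n ⊕ Fin m → ℝ) (hwk1 : wk1 = wk - β • M.mulVec (wk - wt)) :
    (ws - wk1) ⬝ᵥ (Q * M⁻¹).mulVec (ws - wk1)
      ≤ (ws - wk) ⬝ᵥ (Q * M⁻¹).mulVec (ws - wk)
        - β * ((wk - wt) ⬝ᵥ G.mulVec (wk - wt)) := by
  have hdet : IsUnit M.det := (Matrix.isUnit_iff_isUnit_det M).mp hM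
  have hSM : Q * M⁻¹ * M = Q := Matrix.nonsing_inv_mul_cancel_right M Q hdet
  have hsym : (Q * M⁻¹)ᵀ = Q * M⁻¹ := by simpa using hSig.1.eq
  -- key monotonicity inequality
  have hterm : ∀ j : Fin m,
      lpart wt j * (φ' j (xpart wt) ⬝ᵥ (xpart ws - xpart wt))
        - (lpart ws - lpart wt) j * φ j (xpart wt)
        - (lpart ws j * (φ' j (xpart ws) ⬝ᵥ (xpart ws - xpart wt))
            - (lpart ws - lpart wt) j * φ j (xpart ws)) ≤ 0 := by
    intro j
    have hA := grad_ineq12 (hφ j) (hφ' j) (xpart wt) (xpart ws)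
    have hB := grad_ineq12 (hφ j) (hφ' j) (xpart ws) (xpart wt)
    have hBr : φ' j (xpart ws) ⬝ᵥ (xpart wt - xpart ws)
        = -(φ' j (xpart ws) ⬝ᵥ (xpart ws - xpart wt)) := by
      rw [show xpart wt - xpart ws = -(xpart ws - xpart wt) from (neg_sub _ _).symm,
        dotProduct_neg]
    rw [hBr] at hB
    have h1 := hws.2 j
    have h2 := hwt.2 j
    simp only [Pi.sub_apply]
    nlinarith [mul_nonneg h1 (by linarith : (0:ℝ) ≤ φ j (xpart wt) - φ j (xpart ws)
        + φ' j (xpart ws) ⬝ᵥ (xpart ws - xpart wt)),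
      mul_nonneg h2 (by linarith : (0:ℝ) ≤ φ j (xpart ws) - φ j (xpart wt)
        - φ' j (xpart wt) ⬝ᵥ (xpart ws - xpart wt))]
  have hmono : (ws - wt) ⬝ᵥ Gam φ φ' wt - (ws - wt) ⬝ᵥ Gam φ φ' ws ≤ 0 := by
    rw [gam_dot12, gam_dot12]
    have hx : xpart (ws - wt) = xpart ws - xpart wt := rfl
    have hl : lpart (ws - wt) = lpart ws - lpart wt := rfl
    rw [hx, hl]
    have hcomb :
        (∑ j, lpart wt j * (φ' j (xpart wt) ⬝ᵥ (xpart ws - xpart wt)))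
          - (∑ j, (lpart ws - lpart wt) j * φ j (xpart wt))
          - ((∑ j, lpart ws j * (φ' j (xpart ws) ⬝ᵥ (xpart ws - xpart wt)))
              - ∑ j, (lpart ws - lpart wt) j * φ j (xpart ws))
        = ∑ j : Fin m,
            (lpart wt j * (φ' j (xpart wt) ⬝ᵥ (xpart ws - xpart wt))
              - (lpart ws - lpart wt) j * φ j (xpart wt)
              - (lpart ws j * (φ' j (xpart ws) ⬝ᵥ (xpart ws - xpart wt))
                  - (lpart ws - lpart wt) j * φ j (xpart ws))) := by
      rw [← Finset.sum_sub_distrib, ← Finset.sum_sub_distrib, ← Finset.sum_sub_distrib]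
    rw [hcomb]
    exact Finset.sum_nonpos fun j _ => hterm j
  have hQkey : (ws - wt) ⬝ᵥ Q.mulVec (wk - wt) ≤ 0 := by
    have h1 := hpred ws hws
    have h2 := hVI wt hwt
    have h2' : (wt - ws) ⬝ᵥ Gam φ φ' ws = -((ws - wt) ⬝ᵥ Gam φ φ' ws) := by
      rw [show wt - ws = -(ws - wt) from (neg_sub _ _).symm, neg_dotProduct]
    rw [h2'] at h2
    linarith
  -- algebra
  set S := Q * M⁻¹ with hS
  set a := ws - wk with ha
  set d := wk - wt with hd
  have hws1 : ws - wk1 = a + β • M.mulVec d := by rw [hwk1, ha, hd]; module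
  have h1' : S.mulVec (M.mulVec d) = Q.mulVec d := by rw [Matrix.mulVec_mulVec, hSM]
  have h2' : M.mulVec d ⬝ᵥ S.mulVec a = a ⬝ᵥ Q.mulVec d := by
    rw [dswap12, hsym, h1']
  have h3' : M.mulVec d ⬝ᵥ S.mulVec (M.mulVec d) = d ⬝ᵥ (Mᵀ * S * M).mulVec d :=
    (dMtAM12 S M d).symm
  have h4' : M.mulVec d ⬝ᵥ Q.mulVec d = d ⬝ᵥ (Mᵀ * S * M).mulVec d := by
    rw [← h1']; exact h3'
  have e1 : (a + β • M.mulVec d) ⬝ᵥ S.mulVec (a + β • M.mulVec d)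
      = a ⬝ᵥ S.mulVec a + 2 * β * (a ⬝ᵥ Q.mulVec d)
        + β ^ 2 * (d ⬝ᵥ (Mᵀ * S * M).mulVec d) := by
    rw [Matrix.mulVec_add, Matrix.mulVec_smul]
    simp only [dotProduct_add, add_dotProduct, dotProduct_smul, smul_dotProduct,
      smul_eq_mul, h1', h2', h3', h4']
    ring
  have e2 : d ⬝ᵥ G.mulVec d
      = 2 * (d ⬝ᵥ Q.mulVec d) - β * (d ⬝ᵥ (Mᵀ * S * M).mulVec d) := by
    have hT : d ⬝ᵥ Qᵀ.mulVec d = d ⬝ᵥ Q.mulVec d := by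
      conv_lhs => rw [dswap12, Matrix.transpose_transpose]
    rw [hG]
    rw [Matrix.sub_mulVec, Matrix.add_mulVec, Matrix.smul_mulVec]
    rw [dotProduct_sub, dotProduct_add, dotProduct_smul, hT]
    simp only [smul_eq_mul]
    ring
  have hsum : a ⬝ᵥ Q.mulVec d + d ⬝ᵥ Q.mulVec d ≤ 0 := by
    have had : a + d = ws - wt := by rw [ha, hd]; module
    have : (a + d) ⬝ᵥ Q.mulVec d = a ⬝ᵥ Q.mulVec d + d ⬝ᵥ Q.mulVec d :=
      add_dotProduct _ _ _
    rw [← this, had, hd]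
    exact hQkey
  rw [hws1, e1, e2]
  nlinarith [mul_le_mul_of_nonneg_left hsum hβ.le]
end

section
/- (First corrective matrix choice.) Let r, s > 0, E ∈ ℝ^{m×n}, β ∈ (0, 2), and suppose (2 − β)²·rs > ‖E‖². Define Q = [[r·Iₙ, −Eᵀ], [0, s·I_m]] and M = [[Iₙ, −(1/r)·Eᵀ], [0, I_m]]. Then M is invertible, Σ := Q·M⁻¹ = [[r·Iₙ, 0], [0, s·I_m]] is symmetric positive definite, and G := Qᵀ + Q − β·MᵀΣM = [[(2 − β)·r·Iₙ, (β − 1)·Eᵀ], [(β − 1)·E, (2 − β)·s·I_m − (β/r)·EEᵀ]] is symmetric positive definite. -/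
open Matrix
open scoped Matrix.Norms.L2Operator

private lemma dot_self_nonneg' {k : ℕ} (x : Fin k → ℝ) : 0 ≤ x ⬝ᵥ x :=
  Finset.sum_nonneg fun i _ => mul_self_nonneg _

private lemma dot_self_pos' {k : ℕ} {x : Fin k → ℝ} (hx : x ≠ 0) : 0 < x ⬝ᵥ x :=
  (dot_self_nonneg' x).lt_of_ne fun h => hx (dotProduct_self_eq_zero.mp h.symm)

private lemma euclid_norm_sq' {k : ℕ} (x : Fin k → ℝ) :
    ‖(WithLp.equiv 2 (Fin k → ℝ)).symm x‖ ^ 2 = x ⬝ᵥ x := by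
  rw [EuclideanSpace.norm_eq, Real.sq_sqrt (by positivity)]
  simp [dotProduct, sq]

private lemma mulVec_dot_le' {k l : ℕ} (A : Matrix (Fin k) (Fin l) ℝ) (v : Fin l → ℝ) :
    (A *ᵥ v) ⬝ᵥ (A *ᵥ v) ≤ ‖A‖ ^ 2 * (v ⬝ᵥ v) := by
  have h := Matrix.l2_opNorm_mulVec A ((WithLp.equiv 2 (Fin l → ℝ)).symm v)
  have h2 : ‖(WithLp.equiv 2 (Fin k → ℝ)).symm (A *ᵥ v)‖
      ≤ ‖A‖ * ‖(WithLp.equiv 2 (Fin l → ℝ)).symm v‖ := h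
  calc (A *ᵥ v) ⬝ᵥ (A *ᵥ v) = ‖(WithLp.equiv 2 (Fin k → ℝ)).symm (A *ᵥ v)‖ ^ 2 :=
        (euclid_norm_sq' _).symm
    _ ≤ (‖A‖ * ‖(WithLp.equiv 2 (Fin l → ℝ)).symm v‖) ^ 2 :=
        pow_le_pow_left₀ (norm_nonneg _) h2 2
    _ = ‖A‖ ^ 2 * (v ⬝ᵥ v) := by rw [mul_pow, euclid_norm_sq']

private lemma cs_dot' {k : ℕ} (u w : Fin k → ℝ) : (u ⬝ᵥ w) ^ 2 ≤ (u ⬝ᵥ u) * (w ⬝ᵥ w) := by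
  simpa [dotProduct, sq] using Finset.sum_mul_sq_le_sq_mul_sq Finset.univ u w

private lemma key' (A B e2 K a2 b2 t : ℝ) (hA : 0 < A) (hB : 0 < B) (he2 : 0 ≤ e2)
    (hK : K ^ 2 * e2 < A * B) (ha : 0 ≤ a2) (hb : 0 ≤ b2)
    (ht : t ^ 2 ≤ e2 * (a2 * b2)) (hab : 0 < a2 ∨ 0 < b2) :
    0 < A * a2 + 2 * K * t + B * b2 := by
  have hpos : 0 < A * a2 + B * b2 := by
    rcases hab with h | h
    · nlinarith
    · nlinarith
  have h4 : (2 * K * t) ^ 2 ≤ 4 * (K ^ 2 * e2) * (a2 * b2) := by nlinarith [sq_nonneg K]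
  have h5 : (2 * K * t) ^ 2 < (A * a2 + B * b2) ^ 2 := by
    rcases le_or_gt (a2 * b2) 0 with h | h
    · nlinarith [mul_pos hpos hpos, sq_nonneg t, mul_nonneg (sq_nonneg K) he2]
    · nlinarith [sq_nonneg (A * a2 - B * b2)]
  nlinarith [abs_nonneg (2 * K * t), sq_abs (2 * K * t), neg_abs_le (2 * K * t)]

/-- First corrective matrix choice for the prediction-correction method:
`M = [[Iₙ, −(1/r)Eᵀ], [0, I_m]]` is invertible, `Σ = Q·M⁻¹` is the diagonal block
matrix `[[r·Iₙ, 0], [0, s·I_m]]` (symmetric positive definite), and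
`G = Qᵀ + Q − β·MᵀΣM` has the indicated block form and is symmetric positive
definite when `(2 − β)²·rs > ‖E‖²`. -/
theorem stmt14 {n m : ℕ} (r s : ℝ) (hr : 0 < r) (hs : 0 < s)
    (E : Matrix (Fin m) (Fin n) ℝ) (β : ℝ) (hβ0 : 0 < β) (hβ2 : β < 2)
    (hrs : ‖E‖ ^ 2 < (2 - β) ^ 2 * (r * s))
    (Q M : Matrix (Fin n ⊕ Fin m) (Fin n ⊕ Fin m) ℝ)
    (hQ : Q = Matrix.fromBlocks (r • (1 : Matrix (Fin n) (Fin n) ℝ)) (-Eᵀ) 0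
      (s • (1 : Matrix (Fin m) (Fin m) ℝ)))
    (hMdef : M = Matrix.fromBlocks (1 : Matrix (Fin n) (Fin n) ℝ) (-(1 / r) • Eᵀ) 0
      (1 : Matrix (Fin m) (Fin m) ℝ)) :
    IsUnit M ∧
    Q * M⁻¹ = Matrix.fromBlocks (r • (1 : Matrix (Fin n) (Fin n) ℝ)) 0 0
      (s • (1 : Matrix (Fin m) (Fin m) ℝ)) ∧
    (Q * M⁻¹).PosDef ∧
    Qᵀ + Q - β • (Mᵀ * (Q * M⁻¹) * M)
      = Matrix.fromBlocks (((2 - β) * r) • (1 : Matrix (Fin n) (Fin n) ℝ))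
          ((β - 1) • Eᵀ) ((β - 1) • E)
          (((2 - β) * s) • (1 : Matrix (Fin m) (Fin m) ℝ) - (β / r) • (E * Eᵀ)) ∧
    (Qᵀ + Q - β • (Mᵀ * (Q * M⁻¹) * M)).PosDef := by
  have hr' : r ≠ 0 := hr.ne'
  set N : Matrix (Fin n ⊕ Fin m) (Fin n ⊕ Fin m) ℝ :=
    Matrix.fromBlocks 1 ((1 / r) • Eᵀ) 0 1 with hN
  have hMN : M * N = 1 := by
    rw [hMdef, hN, ← Matrix.fromBlocks_one]
    rw [Matrix.fromBlocks_multiply]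
    congr 1 <;> simp
  have hNM : N * M = 1 := by
    rw [hMdef, hN, ← Matrix.fromBlocks_one]
    rw [Matrix.fromBlocks_multiply]
    congr 1 <;> simp
  have hMunit : IsUnit M := ⟨⟨M, N, hMN, hNM⟩, rfl⟩
  have hMinv : M⁻¹ = N := Matrix.inv_eq_right_inv hMN
  have hSig : Q * M⁻¹ = Matrix.fromBlocks (r • (1 : Matrix (Fin n) (Fin n) ℝ)) 0 0
      (s • (1 : Matrix (Fin m) (Fin m) ℝ)) := by
    rw [hMinv, hN, hQ, Matrix.fromBlocks_multiply]
    congr 1 <;> simp [Matrix.smul_mul, Matrix.mul_smul, smul_smul, mul_one_div_cancel hr', inv_mul_cancel₀ hr']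
  have hSigPD : (Matrix.fromBlocks (r • (1 : Matrix (Fin n) (Fin n) ℝ)) 0 0
      (s • (1 : Matrix (Fin m) (Fin m) ℝ))).PosDef := by
    rw [Matrix.smul_one_eq_diagonal, Matrix.smul_one_eq_diagonal, Matrix.fromBlocks_diagonal]
    exact Matrix.PosDef.diagonal (by rintro (i | i) <;> simpa)
  have hG : Qᵀ + Q - β • (Mᵀ * (Q * M⁻¹) * M)
      = Matrix.fromBlocks (((2 - β) * r) • (1 : Matrix (Fin n) (Fin n) ℝ))
          ((β - 1) • Eᵀ) ((β - 1) • E)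
          (((2 - β) * s) • (1 : Matrix (Fin m) (Fin m) ℝ) - (β / r) • (E * Eᵀ)) := by
    rw [hSig, hQ, hMdef]
    rw [Matrix.fromBlocks_transpose, Matrix.fromBlocks_transpose,
      Matrix.fromBlocks_multiply, Matrix.fromBlocks_multiply, Matrix.fromBlocks_smul,
      Matrix.fromBlocks_add, sub_eq_add_neg, Matrix.fromBlocks_neg, Matrix.fromBlocks_add,
      Matrix.fromBlocks_inj]
    refine ⟨?_, ?_, ?_, ?_⟩ <;>
      · simp only [Matrix.transpose_smul, Matrix.transpose_neg, Matrix.transpose_one,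
          Matrix.transpose_transpose, Matrix.smul_mul, Matrix.mul_smul, Matrix.one_mul,
          Matrix.mul_one, Matrix.mul_zero, Matrix.zero_mul, add_zero, zero_add, smul_smul,
          Matrix.transpose_zero, smul_zero, smul_neg, neg_smul, Matrix.neg_mul, Matrix.mul_neg, neg_neg]
        match_scalars <;> field_simp <;> ring
  refine ⟨hMunit, hSig, by rw [hSig]; exact hSigPD, hG, ?_⟩
  rw [hG]
  rw [Matrix.posDef_iff_dotProduct_mulVec]
  constructor
  · rw [Matrix.IsHermitian, Matrix.conjTranspose_eq_transpose_of_trivial,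
      Matrix.fromBlocks_transpose]
    simp [Matrix.transpose_smul, Matrix.transpose_sub, Matrix.transpose_mul]
  · intro x hx
    set u : Fin n → ℝ := x ∘ Sum.inl with hu
    set v : Fin m → ℝ := x ∘ Sum.inr with hv
    have hxe : Sum.elim u v = x := Sum.elim_comp_inl_inr x
    have hstar : star x = x := by
      funext i; simp
    set w : Fin n → ℝ := Eᵀ *ᵥ v with hw
    have hEuv : v ⬝ᵥ (E *ᵥ u) = u ⬝ᵥ w := by
      rw [Matrix.dotProduct_mulVec, ← Matrix.mulVec_transpose, dotProduct_comm, hw]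
    have hEEt : v ⬝ᵥ ((E * Eᵀ) *ᵥ v) = w ⬝ᵥ w := by
      rw [← Matrix.mulVec_mulVec, Matrix.dotProduct_mulVec, ← Matrix.mulVec_transpose, hw]
    rw [hstar, ← hxe, Matrix.fromBlocks_mulVec, sumElim_dotProduct_sumElim]
    simp only [Matrix.add_mulVec, Matrix.sub_mulVec, Matrix.smul_mulVec,
      Matrix.one_mulVec, Matrix.zero_mulVec, dotProduct_add, dotProduct_sub,
      dotProduct_smul, smul_eq_mul, add_zero, zero_add, Sum.elim_comp_inl, Sum.elim_comp_inr]
    rw [hEuv, hEEt]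
    have ha2 : 0 ≤ u ⬝ᵥ u := dot_self_nonneg' u
    have hb2 : 0 ≤ v ⬝ᵥ v := dot_self_nonneg' v
    have hw2nn : 0 ≤ w ⬝ᵥ w := dot_self_nonneg' w
    have he2 : (0:ℝ) ≤ ‖E‖ ^ 2 := by positivity
    have hET : ‖Eᵀ‖ = ‖E‖ := by
      rw [← Matrix.conjTranspose_eq_transpose_of_trivial, Matrix.l2_opNorm_conjTranspose]
    have hw2 : w ⬝ᵥ w ≤ ‖E‖ ^ 2 * (v ⬝ᵥ v) := by
      have := mulVec_dot_le' Eᵀ v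
      rwa [hET, ← hw] at this
    have hts : (u ⬝ᵥ w) ^ 2 ≤ (u ⬝ᵥ u) * (w ⬝ᵥ w) := cs_dot' u w
    have ht2 : (u ⬝ᵥ w) ^ 2 ≤ ‖E‖ ^ 2 * ((u ⬝ᵥ u) * (v ⬝ᵥ v)) := by nlinarith
    have hor : 0 < u ⬝ᵥ u ∨ 0 < v ⬝ᵥ v := by
      by_contra hcon
      push_neg at hcon
      apply hx
      rw [← hxe]
      have hu0 : u = 0 := by
        by_contra h; exact absurd (dot_self_pos' h) (not_lt.mpr hcon.1)
      have hv0 : v = 0 := by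
        by_contra h; exact absurd (dot_self_pos' h) (not_lt.mpr hcon.2)
      rw [hu0, hv0]; funext i; cases i <;> rfl
    have hA : 0 < (2 - β) * r := by nlinarith
    have hB : 0 < (2 - β) * s - β / r * ‖E‖ ^ 2 := by
      have hfrac : β / r * ‖E‖ ^ 2 * r = β * ‖E‖ ^ 2 := by field_simp
      nlinarith [sq_nonneg (1 - β), mul_pos hr hs, mul_nonneg hβ0.le he2]
    have hK : (β - 1) ^ 2 * ‖E‖ ^ 2 < ((2 - β) * r) * ((2 - β) * s - β / r * ‖E‖ ^ 2) := by
      have hfrac : r * (β / r) = β := by field_simp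
      nlinarith [sq_nonneg (1 - β), mul_nonneg hβ0.le he2]
    have hkey := key' ((2 - β) * r) ((2 - β) * s - β / r * ‖E‖ ^ 2) (‖E‖ ^ 2) (β - 1)
      (u ⬝ᵥ u) (v ⬝ᵥ v) (u ⬝ᵥ w) hA hB he2 hK ha2 hb2 ht2 hor
    have hfr : (0:ℝ) ≤ β / r := by positivity
    have h6 : β / r * (w ⬝ᵥ w) ≤ β / r * (‖E‖ ^ 2 * (v ⬝ᵥ v)) :=
      mul_le_mul_of_nonneg_left hw2 hfr
    linarith [hkey, h6]
end

section
/- (Second corrective matrix choice.) Let r, s > 0, E ∈ ℝ^{m×n}, and β ∈ (0, 2). Define Q = [[r·Iₙ, −Eᵀ], [0, s·I_m]] and M = [[Iₙ, 0], [(1/s)·E, I_m]]. Then M is invertible and Σ := Q·M⁻¹ = [[r·Iₙ + (1/s)·EᵀE, −Eᵀ], [−E, s·I_m]] is symmetric positive definite for any r, s > 0; moreover, if (2 − β)²·rs > ‖E‖², then G := Qᵀ + Q − β·MᵀΣM = [[(2 − β)·r·Iₙ, −Eᵀ], [−E, (2 − β)·s·I_m]] is symmetric positive definite. -/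
open Matrix
open scoped Matrix.Norms.L2Operator

private lemma conj_posdef' {k : Type*} [Fintype k] [DecidableEq k]
    {D N : Matrix k k ℝ} (hD : D.PosDef) (hN : IsUnit N) : (Nᵀ * D * N).PosDef := by
  rw [posDef_iff_dotProduct_mulVec]
  constructor
  · rw [← conjTranspose_eq_transpose_of_trivial N]
    exact Matrix.isHermitian_conjTranspose_mul_mul N hD.1
  · intro x hx
    have hNx : N *ᵥ x ≠ 0 := by
      intro h
      exact hx ((Matrix.mulVec_injective_iff_isUnit.2 hN) (by simpa using h))
    have key : star x ⬝ᵥ ((Nᵀ * D * N) *ᵥ x) = star (N *ᵥ x) ⬝ᵥ (D *ᵥ (N *ᵥ x)) := by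
      simp only [star_trivial, ← Matrix.mulVec_mulVec, Matrix.dotProduct_mulVec,
        Matrix.vecMul_transpose]
    rw [key]
    exact hD.dotProduct_mulVec_pos hNx

private lemma posdef_fromBlocks' {n m : Type*} [Fintype n] [Fintype m] [DecidableEq n]
    [DecidableEq m] {A : Matrix n n ℝ} {B : Matrix n m ℝ} {D : Matrix m m ℝ}
    (hA : A.PosDef) (hS : (D - Bᴴ * A⁻¹ * B).PosDef) :
    (Matrix.fromBlocks A B Bᴴ D).PosDef := by
  obtain ⟨invA⟩ := hA.isUnit.nonempty_invertible
  have hBAB : (Bᴴ * A⁻¹ * B).IsHermitian :=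
    Matrix.isHermitian_conjTranspose_mul_mul B hA.1.inv
  have hD : D.IsHermitian := by
    have := hS.1.add hBAB
    simpa using this
  rw [posDef_iff_dotProduct_mulVec]
  constructor
  · exact Matrix.isHermitian_fromBlocks_iff.2 ⟨hA.1, rfl, Matrix.conjTranspose_conjTranspose B, hD⟩
  · intro x hx
    rw [← Sum.elim_comp_inl_inr x, Matrix.dotProduct_mulVec,
      Matrix.schur_complement_eq₁₁ B D _ _ hA.1]
    by_cases hy : x ∘ Sum.inr = 0
    · have hx1 : x ∘ Sum.inl ≠ 0 := by
        intro h1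
        apply hx
        funext i
        cases i with
        | inl i => exact congrFun h1 i
        | inr i => exact congrFun hy i
      rw [hy]
      simp only [Matrix.mulVec_zero, add_zero, star_zero, Matrix.zero_vecMul,
        zero_dotProduct, dotProduct_zero]
      rw [← Matrix.dotProduct_mulVec]
      exact hA.dotProduct_mulVec_pos hx1
    · have h1 : (0:ℝ) ≤ star (x ∘ Sum.inl + (A⁻¹ * B) *ᵥ x ∘ Sum.inr) ᵥ* A ⬝ᵥ
          (x ∘ Sum.inl + (A⁻¹ * B) *ᵥ x ∘ Sum.inr) := by
        rw [← Matrix.dotProduct_mulVec]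
        exact hA.posSemidef.dotProduct_mulVec_nonneg _
      have h2 : (0:ℝ) < star (x ∘ Sum.inr) ᵥ* (D - Bᴴ * A⁻¹ * B) ⬝ᵥ x ∘ Sum.inr := by
        rw [← Matrix.dotProduct_mulVec]
        exact hS.dotProduct_mulVec_pos hy
      linarith

private lemma dot_self_eq_normsq' {k : Type*} [Fintype k] (v : k → ℝ) :
    v ⬝ᵥ v = ‖(EuclideanSpace.equiv k ℝ).symm v‖ ^ 2 := by
  rw [EuclideanSpace.norm_eq, Real.sq_sqrt (by positivity)]
  simp [dotProduct, sq, Real.norm_eq_abs, abs_mul_abs_self]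

private lemma EEt_bound' {n m : ℕ} (E : Matrix (Fin m) (Fin n) ℝ) (y : Fin m → ℝ) :
    y ⬝ᵥ ((E * Eᵀ) *ᵥ y) ≤ ‖E‖ ^ 2 * (y ⬝ᵥ y) := by
  have h1 : y ⬝ᵥ ((E * Eᵀ) *ᵥ y) = (Eᵀ *ᵥ y) ⬝ᵥ (Eᵀ *ᵥ y) := by
    rw [← Matrix.mulVec_mulVec, Matrix.dotProduct_mulVec, ← Matrix.mulVec_transpose]
  have hEt : ‖Eᵀ‖ = ‖E‖ := by
    rw [← conjTranspose_eq_transpose_of_trivial E, Matrix.l2_opNorm_conjTranspose]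
  have h2 := Matrix.l2_opNorm_mulVec Eᵀ ((EuclideanSpace.equiv (Fin m) ℝ).symm y)
  rw [h1, dot_self_eq_normsq', dot_self_eq_normsq']
  calc ‖(EuclideanSpace.equiv (Fin n) ℝ).symm (Eᵀ *ᵥ y)‖ ^ 2
      ≤ (‖Eᵀ‖ * ‖(EuclideanSpace.equiv (Fin m) ℝ).symm y‖) ^ 2 := by
        apply pow_le_pow_left₀ (norm_nonneg _) h2
      _ = ‖E‖ ^ 2 * ‖(EuclideanSpace.equiv (Fin m) ℝ).symm y‖ ^ 2 := by
        rw [hEt]; ring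

/-- Second corrective matrix choice for the prediction-correction method:
`M = [[Iₙ, 0], [(1/s)E, I_m]]` is invertible, `Σ = Q·M⁻¹` has the indicated block
form and is symmetric positive definite for any `r, s > 0`; moreover, if
`(2 − β)²·rs > ‖E‖²` then `G = Qᵀ + Q − β·MᵀΣM` has the indicated block form and
is symmetric positive definite. -/
theorem stmt15 {n m : ℕ} (r s : ℝ) (hr : 0 < r) (hs : 0 < s)
    (E : Matrix (Fin m) (Fin n) ℝ) (β : ℝ) (hβ0 : 0 < β) (hβ2 : β < 2)
    (Q M : Matrix (Fin n ⊕ Fin m) (Fin n ⊕ Fin m) ℝ)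
    (hQ : Q = Matrix.fromBlocks (r • (1 : Matrix (Fin n) (Fin n) ℝ)) (-Eᵀ) 0
      (s • (1 : Matrix (Fin m) (Fin m) ℝ)))
    (hMdef : M = Matrix.fromBlocks (1 : Matrix (Fin n) (Fin n) ℝ) 0 ((1 / s) • E)
      (1 : Matrix (Fin m) (Fin m) ℝ)) :
    IsUnit M ∧
    Q * M⁻¹ = Matrix.fromBlocks
      (r • (1 : Matrix (Fin n) (Fin n) ℝ) + (1 / s) • (Eᵀ * E)) (-Eᵀ) (-E)
      (s • (1 : Matrix (Fin m) (Fin m) ℝ)) ∧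
    (Q * M⁻¹).PosDef ∧
    (‖E‖ ^ 2 < (2 - β) ^ 2 * (r * s) →
      Qᵀ + Q - β • (Mᵀ * (Q * M⁻¹) * M)
        = Matrix.fromBlocks (((2 - β) * r) • (1 : Matrix (Fin n) (Fin n) ℝ)) (-Eᵀ)
            (-E) (((2 - β) * s) • (1 : Matrix (Fin m) (Fin m) ℝ)) ∧
      (Qᵀ + Q - β • (Mᵀ * (Q * M⁻¹) * M)).PosDef) := by
  have hs' : s ≠ 0 := ne_of_gt hs
  set N : Matrix (Fin n ⊕ Fin m) (Fin n ⊕ Fin m) ℝ :=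
    Matrix.fromBlocks 1 0 (-((1/s) • E)) 1 with hN
  have hMN : M * N = 1 := by
    rw [hMdef, hN, Matrix.fromBlocks_multiply, ← Matrix.fromBlocks_one]
    congr 1 <;> simp
  have hInv : Invertible M := invertibleOfRightInverse (a := M) (b := N) hMN
  have hUnit : IsUnit M := isUnit_of_invertible M
  have hMinv : M⁻¹ = N := inv_eq_right_inv hMN
  have hNM : N * M = 1 := mul_eq_one_comm.mp hMN
  have hNInv : Invertible N := invertibleOfRightInverse (a := N) (b := M) hNM
  have hNUnit : IsUnit N := isUnit_of_invertible N
  have hSig : Q * M⁻¹ = Matrix.fromBlocks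
      (r • (1 : Matrix (Fin n) (Fin n) ℝ) + (1 / s) • (Eᵀ * E)) (-Eᵀ) (-E)
      (s • (1 : Matrix (Fin m) (Fin m) ℝ)) := by
    rw [hMinv, hQ, hN, Matrix.fromBlocks_multiply]
    simp [Matrix.mul_smul, Matrix.smul_mul, smul_smul, hs', mul_one_div_cancel]
  set D : Matrix (Fin n ⊕ Fin m) (Fin n ⊕ Fin m) ℝ :=
    Matrix.fromBlocks (r • 1) 0 0 (s • 1) with hD
  have hDdiag : D = Matrix.diagonal (Sum.elim (fun _ : Fin n => r) (fun _ : Fin m => s)) := by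
    rw [hD, ← Matrix.fromBlocks_diagonal]
    simp [Matrix.smul_one_eq_diagonal]
  have hDpos : D.PosDef := by
    rw [hDdiag]
    refine Matrix.posDef_diagonal_iff.2 ?_
    rintro (i | i) <;> simpa using ‹_›
  have hfact : Q * M⁻¹ = Nᵀ * D * N := by
    rw [hSig, hN, hD, Matrix.fromBlocks_transpose, Matrix.fromBlocks_multiply,
      Matrix.fromBlocks_multiply]
    congr 1 <;> simp [Matrix.mul_smul, Matrix.smul_mul, smul_smul, hs', mul_comm,
      Matrix.transpose_smul]
  have hMQ : Mᵀ * (Q * M⁻¹) * M = D := by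
    rw [hMinv, Matrix.mul_assoc, Matrix.mul_assoc Q, hNM, Matrix.mul_one]
    rw [hMdef, hQ, hD, Matrix.fromBlocks_transpose, Matrix.fromBlocks_multiply]
    simp [Matrix.mul_smul, Matrix.smul_mul, smul_smul, hs', mul_one_div_cancel,
      Matrix.transpose_smul]
  have hGform : Qᵀ + Q - β • (Mᵀ * (Q * M⁻¹) * M)
      = Matrix.fromBlocks (((2 - β) * r) • (1 : Matrix (Fin n) (Fin n) ℝ)) (-Eᵀ)
          (-E) (((2 - β) * s) • (1 : Matrix (Fin m) (Fin m) ℝ)) := by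
    rw [hMQ, hQ, hD, Matrix.fromBlocks_transpose, Matrix.fromBlocks_smul,
      Matrix.fromBlocks_add, sub_eq_add_neg, Matrix.fromBlocks_neg, Matrix.fromBlocks_add]
    refine Matrix.fromBlocks_inj.2 ⟨?_, ?_, ?_, ?_⟩
    · rw [Matrix.transpose_smul, Matrix.transpose_one]; module
    · simp
    · simp
    · rw [Matrix.transpose_smul, Matrix.transpose_one]; module
  refine ⟨hUnit, hSig, ?_, fun hcond => ⟨hGform, ?_⟩⟩
  · rw [hfact]
    exact conj_posdef' hDpos hNUnit
  · rw [hGform]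
    set a : ℝ := 2 - β with ha
    have ha0 : 0 < a := by simp [ha]; linarith
    have har : (0:ℝ) < a * r := mul_pos ha0 hr
    have hA : (((a * r) • (1 : Matrix (Fin n) (Fin n) ℝ))).PosDef := by
      rw [Matrix.smul_one_eq_diagonal]
      exact Matrix.posDef_diagonal_iff.2 fun i => har
    have hAinv : (((a * r) • (1 : Matrix (Fin n) (Fin n) ℝ)))⁻¹ = (a * r)⁻¹ • 1 := by
      apply inv_eq_right_inv
      rw [Matrix.smul_mul, Matrix.mul_smul, smul_smul, Matrix.one_mul,
        mul_inv_cancel₀ (ne_of_gt har), one_smul]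
    have hBH : (-Eᵀ : Matrix (Fin n) (Fin m) ℝ)ᴴ = -E := by
      rw [Matrix.conjTranspose_neg, conjTranspose_eq_transpose_of_trivial,
        Matrix.transpose_transpose]
    rw [← hBH]
    apply posdef_fromBlocks' hA
    have hSchur : ((a * s) • (1 : Matrix (Fin m) (Fin m) ℝ)) -
        (-Eᵀ)ᴴ * (((a * r) • (1 : Matrix (Fin n) (Fin n) ℝ)))⁻¹ * (-Eᵀ)
        = (a * s) • 1 - (a * r)⁻¹ • (E * Eᵀ) := by
      rw [hBH, hAinv]
      rw [Matrix.mul_smul, Matrix.smul_mul, Matrix.mul_one, Matrix.neg_mul, Matrix.mul_neg,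
        neg_neg]
    rw [hSchur]
    rw [posDef_iff_dotProduct_mulVec]
    constructor
    · show _ = _
      rw [Matrix.conjTranspose_sub, conjTranspose_eq_transpose_of_trivial,
        conjTranspose_eq_transpose_of_trivial, Matrix.transpose_smul, Matrix.transpose_one,
        Matrix.transpose_smul, Matrix.transpose_mul, Matrix.transpose_transpose]
    · intro y hy
      have hyy : 0 < y ⬝ᵥ y := by
        rw [dot_self_eq_normsq']
        have : (EuclideanSpace.equiv (Fin m) ℝ).symm y ≠ 0 := by
          simpa using hy
        exact pow_pos (norm_pos_iff.mpr this) 2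
      have hEE := EEt_bound' E y
      have hform : star y ⬝ᵥ (((a * s) • (1 : Matrix (Fin m) (Fin m) ℝ)
          - (a * r)⁻¹ • (E * Eᵀ)) *ᵥ y)
          = (a * s) * (y ⬝ᵥ y) - (a * r)⁻¹ * (y ⬝ᵥ ((E * Eᵀ) *ᵥ y)) := by
        rw [Matrix.sub_mulVec, Matrix.smul_mulVec, Matrix.smul_mulVec,
          Matrix.one_mulVec]
        simp [dotProduct_sub, dotProduct_smul, smul_eq_mul]
      rw [hform]
      have h3 : (a * r)⁻¹ * (y ⬝ᵥ ((E * Eᵀ) *ᵥ y)) ≤ (a * r)⁻¹ * (‖E‖ ^ 2 * (y ⬝ᵥ y)) :=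
        mul_le_mul_of_nonneg_left hEE (le_of_lt (inv_pos.2 har))
      have h4 : (a * r)⁻¹ * (‖E‖ ^ 2 * (y ⬝ᵥ y)) < (a * r)⁻¹ * ((a ^ 2 * (r * s)) * (y ⬝ᵥ y)) :=
        mul_lt_mul_of_pos_left (mul_lt_mul_of_pos_right hcond hyy) (inv_pos.2 har)
      have h5 : (a * r)⁻¹ * ((a ^ 2 * (r * s)) * (y ⬝ᵥ y)) = (a * s) * (y ⬝ᵥ y) := by
        field_simp
      linarith
end
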